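/- Let φ ∈ C(ℝ,X) and ψ ∈ C(ℝ,Y) satisfy 𝔐^u_ψ ⊆ 𝔐^u_φ. If ψ is Bohr almost periodic, then φ is Bohr almost periodic. -/

import Mathlib

open Filter Topology

/-- The Bebutov metric on `C(ℝ, X)`:
`d(φ₁,φ₂) = sup_{T>0} min ( max_{|t| ≤ T} ρ(φ₁(t), φ₂(t)), 1/T )`. -/
noncomputable def bebutovDist {X : Type*} [MetricSpace X] (φ ψ : C(ℝ, X)) : ℝ :=
  ⨆ T : Set.Ioi (0 : ℝ),
    min (⨆ t : Set.Icc (-(T : ℝ)) (T : ℝ), dist (φ t.1) (ψ t.1)) (1 / (T : ℝ))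

/-- The translate `φ^h` of `φ ∈ C(ℝ,X)`, given by `φ^h(t) = φ(t + h)`. -/
def timeShift {X : Type*} [MetricSpace X] (φ : C(ℝ, X)) (h : ℝ) : C(ℝ, X) :=
  ⟨fun t => φ (t + h), φ.continuous.comp (continuous_id.add continuous_const)⟩

/-- `𝔑_φ`: the family of sequences `{tₙ} ⊂ ℝ` with `φ^{tₙ} → φ` in `(C(ℝ,X),d)`. -/
def NClass {X : Type*} [MetricSpace X] (φ : C(ℝ, X)) : Set (ℕ → ℝ) :=
  {t | Tendsto (fun n => bebutovDist (timeShift φ (t n)) φ) atTop (𝓝 0)}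

/-- `𝔐_φ`: the family of sequences `{tₙ} ⊂ ℝ` such that `{φ^{tₙ}}` converges in
`(C(ℝ,X),d)`. -/
def MClass {X : Type*} [MetricSpace X] (φ : C(ℝ, X)) : Set (ℕ → ℝ) :=
  {t | ∃ ψ : C(ℝ, X), Tendsto (fun n => bebutovDist (timeShift φ (t n)) ψ) atTop (𝓝 0)}

/-- `𝔑^u_φ`: sequences in `𝔑_φ` with `φ^{s+tₙ} → φ^s` uniformly in `s ∈ ℝ`. -/
def NuClass {X : Type*} [MetricSpace X] (φ : C(ℝ, X)) : Set (ℕ → ℝ) :=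
  {t | t ∈ NClass φ ∧ ∀ ε > (0 : ℝ), ∃ N : ℕ, ∀ n ≥ N, ∀ s : ℝ,
    bebutovDist (timeShift φ (s + t n)) (timeShift φ s) < ε}

/-- `𝔐^u_φ`: sequences in `𝔐_φ` such that `{φ^{s+tₙ}}` converges uniformly in `s ∈ ℝ`. -/
def MuClass {X : Type*} [MetricSpace X] (φ : C(ℝ, X)) : Set (ℕ → ℝ) :=
  {t | t ∈ MClass φ ∧ ∃ ψ : ℝ → C(ℝ, X), ∀ ε > (0 : ℝ), ∃ N : ℕ, ∀ n ≥ N, ∀ s : ℝ,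
    bebutovDist (timeShift φ (s + t n)) (ψ s) < ε}

/-- A subset `S ⊆ ℝ` is relatively dense if some length `l > 0` interval always meets it. -/
def RelativelyDense (S : Set ℝ) : Prop :=
  ∃ l > (0 : ℝ), ∀ a : ℝ, ∃ τ ∈ S, τ ∈ Set.Icc a (a + l)

/-- `φ` is Poisson stable: for every `ε > 0` and `l > 0` there are `ε`-shifts `τ₊ > l`
and `τ₋ < −l`. -/
def PoissonStable {X : Type*} [MetricSpace X] (φ : C(ℝ, X)) : Prop :=
  ∀ ε > (0 : ℝ), ∀ l > (0 : ℝ),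
    (∃ τ : ℝ, l < τ ∧ bebutovDist (timeShift φ τ) φ < ε) ∧
    (∃ τ : ℝ, τ < -l ∧ bebutovDist (timeShift φ τ) φ < ε)

/-- `φ` is almost recurrent in the sense of Bebutov. -/
def AlmostRecurrent {X : Type*} [MetricSpace X] (φ : C(ℝ, X)) : Prop :=
  ∀ ε > (0 : ℝ), RelativelyDense {τ : ℝ | bebutovDist (timeShift φ τ) φ < ε}

/-- `τ` is an `ε`-almost period of `φ`: `ρ(φ(t+τ),φ(t)) < ε` for all `t`. -/
def IsAlmostPeriod {X : Type*} [MetricSpace X] (φ : C(ℝ, X)) (ε τ : ℝ) : Prop :=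
  ∀ t : ℝ, dist (φ (t + τ)) (φ t) < ε

/-- `φ` is Bohr almost periodic: its set of `ε`-almost periods is relatively dense for
every `ε > 0`. -/
def BohrAlmostPeriodic {X : Type*} [MetricSpace X] (φ : C(ℝ, X)) : Prop :=
  ∀ ε > (0 : ℝ), RelativelyDense {τ : ℝ | IsAlmostPeriod φ ε τ}

/-- `φ` is Lagrange stable: every sequence of translates has a subsequence converging in
the Bebutov metric (i.e. `{φ^h : h ∈ ℝ}` is relatively compact in `(C(ℝ,X),d)`). -/
def LagrangeStable {X : Type*} [MetricSpace X] (φ : C(ℝ, X)) : Prop :=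
  ∀ h : ℕ → ℝ, ∃ (k : ℕ → ℕ) (ψ : C(ℝ, X)), StrictMono k ∧
    Tendsto (fun n => bebutovDist (timeShift φ (h (k n))) ψ) atTop (𝓝 0)

/-- `φ` is Birkhoff recurrent: almost recurrent and Lagrange stable. -/
def BirkhoffRecurrent {X : Type*} [MetricSpace X] (φ : C(ℝ, X)) : Prop :=
  AlmostRecurrent φ ∧ LagrangeStable φ

/-- `φ` is Levitan almost periodic. -/
def LevitanAlmostPeriodic {X : Type*} [MetricSpace X] (φ : C(ℝ, X)) : Prop :=
  ∃ (Z : Type) (_ : MetricSpace Z) (_ : CompleteSpace Z) (χ : C(ℝ, Z)),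
    BohrAlmostPeriodic χ ∧
    ∀ ε > (0 : ℝ), ∃ δ > (0 : ℝ), ∀ τ : ℝ, IsAlmostPeriod χ δ τ →
      bebutovDist (timeShift φ τ) φ < ε

/-- `φ` is quasi-periodic with the spectrum of frequencies `ν₁,…,ν_k`. -/
def QuasiPeriodic {X : Type*} [MetricSpace X] (φ : C(ℝ, X)) {k : ℕ} (ν : Fin k → ℝ) :
    Prop :=
  LinearIndependent ℚ ν ∧
  ∃ Φ : C((Fin k → ℝ), X),
    (∀ v : Fin k → ℝ, Φ (fun i => v i + 2 * Real.pi) = Φ v) ∧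
    ∀ t : ℝ, φ t = Φ (fun i => ν i * t)

/-- `φ` is pseudo-periodic: for every `ε > 0` and `l > 0` there exist `ε`-almost
periods `τ₊ > l` and `τ₋ < −l`. -/
def PseudoPeriodic {X : Type*} [MetricSpace X] (φ : C(ℝ, X)) : Prop :=
  ∀ ε > (0 : ℝ), ∀ l > (0 : ℝ),
    (∃ τ : ℝ, l < τ ∧ IsAlmostPeriod φ ε τ) ∧
    (∃ τ : ℝ, τ < -l ∧ IsAlmostPeriod φ ε τ)

/-- `φ` is pseudo-recurrent. -/
def PseudoRecurrent {X : Type*} [MetricSpace X] (φ : C(ℝ, X)) : Prop :=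
  ∀ ε > (0 : ℝ), ∀ l : ℝ, ∃ L : ℝ, l ≤ L ∧ ∀ τ₀ : ℝ, ∃ τ ∈ Set.Icc l L,
    ∀ t : ℝ, |t| ≤ 1 / ε → dist (φ (t + τ₀ + τ)) (φ (t + τ₀)) ≤ ε

/-!
If the `ε`-almost periods of `φ` were not relatively dense, the gaps of that set would yield a
sequence `v` no difference `v j - v i` (`i < j`) of which is an `ε`-almost period of `φ`. The
translates of a Bohr almost periodic `ψ` form a totally bounded set for the uniform distance
(Bochner), so `v` has a subsequence along which `ψ`'s translates converge uniformly; that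
subsequence lies in `𝔐^u_ψ ⊆ 𝔐^u_φ`, so `φ`'s translates along it are uniformly Cauchy, and the
difference of two late terms is an `ε`-almost period of `φ`.
-/

open UniformFun

section Bebutov

variable {X : Type*} [MetricSpace X]

@[simp]
lemma timeShift_apply (φ : C(ℝ, X)) (h t : ℝ) : timeShift φ h t = φ (t + h) := rfl

@[simp]
lemma timeShift_zero (φ : C(ℝ, X)) : timeShift φ 0 = φ := by
  ext t
  simp

lemma bddAbove_range_dist_Icc (f g : C(ℝ, X)) (T : ℝ) :
    BddAbove (Set.range fun t : Set.Icc (-T) T => dist (f t) (g t)) := by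
  have := isCompact_Icc.bddAbove_image (f := fun t => dist (f t) (g t)) (K := Set.Icc (-T) T)
    (by fun_prop)
  rwa [Set.image_eq_range] at this

lemma bddAbove_range_bebutovDist_terms (f g : C(ℝ, X)) :
    BddAbove (Set.range fun T : Set.Ioi (0 : ℝ) =>
      min (⨆ t : Set.Icc (-(T : ℝ)) T, dist (f t) (g t)) (1 / (T : ℝ))) := by
  obtain ⟨C, hC⟩ := bddAbove_range_dist_Icc f g 1
  refine ⟨max C 1, ?_⟩
  rintro _ ⟨⟨T, hT⟩, rfl⟩
  rcases le_or_gt T 1 with hT1 | hT1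
  · refine (min_le_left _ _).trans (Real.iSup_le (fun t => ?_) (by positivity))
    refine (hC ⟨⟨t, ?_, ?_⟩, rfl⟩).trans (le_max_left _ _) <;> linarith [t.2.1, t.2.2]
  · refine (min_le_right _ _).trans ((le_max_right _ _).trans' ?_)
    rw [div_le_one (by positivity)]
    exact hT1.le

lemma bebutovDist_le_of_forall_dist_le {f g : C(ℝ, X)} {C : ℝ} (hC : 0 ≤ C)
    (h : ∀ t, dist (f t) (g t) ≤ C) : bebutovDist f g ≤ C :=
  Real.iSup_le (fun _ => (min_le_left _ _).trans (Real.iSup_le (fun t => h t) hC)) hC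

lemma dist_apply_zero_le_bebutovDist (f g : C(ℝ, X)) : dist (f 0) (g 0) ≤ bebutovDist f g := by
  set c := dist (f 0) (g 0)
  -- the window of half-length `T = 1 / (c + 1)` contains `0` and has `1 / T > c`
  let T : Set.Ioi (0 : ℝ) := ⟨1 / (c + 1), by simp only [Set.mem_Ioi]; positivity⟩
  have hT : (0 : ℝ) ≤ T := T.2.le
  have hc_le : c ≤ ⨆ t : Set.Icc (-(T : ℝ)) T, dist (f t) (g t) :=
    le_ciSup (f := fun t : Set.Icc (-(T : ℝ)) T => dist (f t) (g t))
      (bddAbove_range_dist_Icc f g T) ⟨0, neg_nonpos.mpr hT, hT⟩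
  calc c ≤ min (⨆ t : Set.Icc (-(T : ℝ)) T, dist (f t) (g t)) (1 / (T : ℝ)) :=
        le_min hc_le (by simp [T])
    _ ≤ bebutovDist f g := le_ciSup (bddAbove_range_bebutovDist_terms f g) T

lemma bebutovDist_nonneg (f g : C(ℝ, X)) : 0 ≤ bebutovDist f g :=
  dist_nonneg.trans (dist_apply_zero_le_bebutovDist f g)

end Bebutov

section MuClass

variable {X : Type*} [MetricSpace X] {φ : C(ℝ, X)} {t : ℕ → ℝ}

lemma exists_tendstoUniformly_of_mem_MuClass (ht : t ∈ MuClass φ) :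
    ∃ χ : ℝ → X, TendstoUniformly (fun n s => φ (s + t n)) χ atTop := by
  obtain ⟨-, ψ, hψ⟩ := ht
  refine ⟨fun s => ψ s 0, Metric.tendstoUniformly_iff.mpr fun ε hε => ?_⟩
  obtain ⟨N, hN⟩ := hψ ε hε
  refine eventually_atTop.mpr ⟨N, fun n hn s => ?_⟩
  have := (dist_apply_zero_le_bebutovDist _ _).trans_lt (hN n hn s)
  rw [dist_comm]
  simpa using this

lemma mem_MuClass_of_tendstoUniformly {χ : ℝ → X}
    (h : TendstoUniformly (fun n s => φ (s + t n)) χ atTop) : t ∈ MuClass φ := by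
  let χC : C(ℝ, X) := ⟨χ, h.continuous (Eventually.of_forall fun n => by fun_prop).frequently⟩
  have hshift : ∀ ε > 0, ∃ N, ∀ n ≥ N, ∀ s,
      bebutovDist (timeShift φ (s + t n)) (timeShift χC s) < ε := by
    intro ε hε
    obtain ⟨N, hN⟩ := eventually_atTop.mp (Metric.tendstoUniformly_iff.mp h (ε / 2) (by positivity))
    refine ⟨N, fun n hn s => lt_of_le_of_lt (b := ε / 2) ?_ (by linarith)⟩
    refine bebutovDist_le_of_forall_dist_le (by positivity) fun u => ?_
    rw [dist_comm]
    simpa [χC, add_assoc] using (hN n hn (u + s)).le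
  refine ⟨⟨χC, Metric.tendsto_atTop.mpr fun ε hε => ?_⟩, _, hshift⟩
  obtain ⟨N, hN⟩ := hshift ε hε
  refine ⟨N, fun n hn => ?_⟩
  rw [Real.dist_0_eq_abs, abs_of_nonneg (bebutovDist_nonneg _ _)]
  simpa using hN n hn 0

end MuClass

lemma exists_isAlmostPeriod_of_tendstoUniformly {X : Type*} [MetricSpace X] {φ : C(ℝ, X)}
    {v : ℕ → ℝ} {χ : ℝ → X} (h : TendstoUniformly (fun n s => φ (s + v n)) χ atTop)
    {ε : ℝ} (hε : 0 < ε) : ∃ N, IsAlmostPeriod φ ε (v (N + 1) - v N) := by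
  obtain ⟨N, hN⟩ :=
    Metric.uniformCauchySeqOn_iff.mp (tendstoUniformlyOn_univ.mpr h).uniformCauchySeqOn ε hε
  refine ⟨N, fun s => ?_⟩
  have := hN (N + 1) N.le_succ N le_rfl (s - v N) trivial
  rwa [show s - v N + v (N + 1) = s + (v (N + 1) - v N) by ring, sub_add_cancel] at this

lemma exists_seq_sub_notMem_of_not_relativelyDense {S : Set ℝ} (hS : ¬ RelativelyDense S) :
    ∃ v : ℕ → ℝ, ∀ i j, i < j → v j - v i ∉ S := by
  simp only [RelativelyDense, not_exists, not_and, not_forall] at hS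
  -- if `|x| ≤ M` on `s`, all `y - x` lie in a gap of length `2M + 2` once `y` is its midpoint
  have hfar : ∀ s : Finset ℝ, ∃ y, True ∧ ∀ x ∈ s, y - x ∉ S := by
    intro s
    set M := ∑ x ∈ s, |x|
    obtain ⟨a, ha⟩ := hS (2 * M + 2) (by positivity)
    refine ⟨a + M + 1, trivial, fun x hx hmem => ?_⟩
    have hxM := abs_le.mp ((Finset.single_le_sum (fun y _ => abs_nonneg y) hx : |x| ≤ M))
    exact ha _ hmem ⟨by linarith, by linarith⟩
  obtain ⟨v, -, hv⟩ := exists_seq_of_forall_finset_exists (fun _ => True)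
    (fun x y => y - x ∉ S) fun s _ => hfar s
  exact ⟨v, hv⟩

section Bohr

variable {Y : Type*} [MetricSpace Y] {ψ : C(ℝ, Y)}

lemma uniformContinuous_shift {f : ℝ → Y} (hf : UniformContinuous f) :
    UniformContinuous fun a : ℝ => ofFun fun u => f (u + a) :=
  (UniformFun.postcomp_uniformContinuous hf).comp <| LipschitzWith.uniformContinuous (K := 1) <|
    lipschitzWith_ofFun_iff.mpr fun u => (isometry_add_left u).lipschitz

lemma BohrAlmostPeriodic.exists_forall_dist_shift_lt (hψ : BohrAlmostPeriodic ψ) {ε : ℝ}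
    (hε : 0 < ε) : ∃ l, ∀ a, ∃ r ∈ Set.Icc 0 l, ∀ u, dist (ψ (u + a)) (ψ (u + r)) < ε := by
  obtain ⟨l, -, hdense⟩ := hψ ε hε
  refine ⟨l, fun a => ?_⟩
  obtain ⟨τ, hτ, hτa, hτl⟩ := hdense (-a)
  refine ⟨a + τ, ⟨by linarith, by linarith⟩, fun u => ?_⟩
  rw [dist_comm, ← add_assoc]
  exact hτ (u + a)

lemma BohrAlmostPeriodic.uniformContinuous (hψ : BohrAlmostPeriodic ψ) : UniformContinuous ψ := by
  refine Metric.uniformContinuous_iff.mpr fun ε hε => ?_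
  obtain ⟨l, hshift⟩ := hψ.exists_forall_dist_shift_lt (show 0 < ε / 3 by positivity)
  obtain ⟨δ, hδ, hψδ⟩ := Metric.uniformContinuousOn_iff.mp
    (isCompact_Icc.uniformContinuousOn_of_continuous ψ.continuous.continuousOn :
      UniformContinuousOn ψ (Set.Icc (-1) (l + 1))) (ε / 3) (by positivity)
  refine ⟨min δ 1, by positivity, fun {x y} hxy => ?_⟩
  -- move the pair `(x, y)` by a common shift into the compact window `[-1, l + 1]`
  obtain ⟨r, ⟨hr0, hrl⟩, hr⟩ := hshift x
  have hxy' := abs_lt.mp (Real.dist_eq x y ▸ hxy.trans_le (min_le_right _ _))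
  have h₁ : dist (ψ x) (ψ r) < ε / 3 := by simpa using hr 0
  have h₂ : dist (ψ r) (ψ (y - x + r)) < ε / 3 :=
    hψδ r ⟨by linarith, by linarith⟩ _ ⟨by linarith, by linarith⟩
      (by rw [Real.dist_eq, show r - (y - x + r) = x - y by ring, ← Real.dist_eq]
          exact hxy.trans_le (min_le_left _ _))
  have h₃ : dist (ψ (y - x + r)) (ψ y) < ε / 3 := by
    rw [dist_comm]
    simpa using hr (y - x)
  calc dist (ψ x) (ψ y)
      ≤ dist (ψ x) (ψ r) + dist (ψ r) (ψ (y - x + r)) + dist (ψ (y - x + r)) (ψ y) :=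
        dist_triangle4 _ _ _ _
    _ < ε := by linarith

lemma BohrAlmostPeriodic.totallyBounded_range_shift (hψ : BohrAlmostPeriodic ψ) :
    TotallyBounded (Set.range fun a : ℝ => ofFun fun u => ψ (u + a)) := by
  set T := fun a : ℝ => ofFun fun u => ψ (u + a)
  refine EMetric.totallyBounded_iff.mpr fun ε hε => ?_
  obtain ⟨r, -, hr0, hrε⟩ := ENNReal.lt_iff_exists_real_btwn.mp (ENNReal.half_pos hε.ne')
  obtain ⟨l, hshift⟩ := hψ.exists_forall_dist_shift_lt (ENNReal.ofReal_pos.mp hr0)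
  -- every translate is close to one with shift in `[0, l]`, and those form a compact set
  obtain ⟨t, htfin, hnet⟩ := EMetric.totallyBounded_iff.mp
    (isCompact_Icc.image (uniformContinuous_shift hψ.uniformContinuous).continuous).totallyBounded
    (ε / 2) (ENNReal.half_pos hε.ne')
  refine ⟨t, htfin, ?_⟩
  rintro _ ⟨a, rfl⟩
  obtain ⟨c, hc, hac⟩ := hshift a
  obtain ⟨y, hy, hcy⟩ := Set.mem_iUnion₂.mp (hnet ⟨c, hc, rfl⟩)
  refine Set.mem_iUnion₂.mpr ⟨y, hy, ?_⟩
  have hTac : edist (T a) (T c) ≤ ENNReal.ofReal r :=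
    edist_le.mpr fun u => (edist_dist _ _).trans_le (ENNReal.ofReal_le_ofReal (hac u).le)
  calc edist (T a) y ≤ edist (T a) (T c) + edist (T c) y := edist_triangle _ _ _
    _ < ε / 2 + ε / 2 := ENNReal.add_lt_add (hTac.trans_lt hrε) hcy
    _ = ε := ENNReal.add_halves ε

lemma BohrAlmostPeriodic.exists_subseq_tendstoUniformly [CompleteSpace Y]
    (hψ : BohrAlmostPeriodic ψ) (v : ℕ → ℝ) :
    ∃ k : ℕ → ℕ, StrictMono k ∧ ∃ χ : ℝ → Y,
      TendstoUniformly (fun n u => ψ (u + v (k n))) χ atTop := by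
  obtain ⟨χ, -, k, hk, hlim⟩ :=
    (hψ.totallyBounded_range_shift.closure.isCompact_of_isClosed isClosed_closure).tendsto_subseq
      fun n => subset_closure (Set.mem_range_self (v n))
  exact ⟨k, hk, toFun χ, UniformFun.tendsto_iff_tendstoUniformly.mp hlim⟩

end Bohr

theorem bohrAlmostPeriodic_of_MuClass_subset_general
    {X Y : Type*} [MetricSpace X] [MetricSpace Y] [CompleteSpace Y]
    (φ : C(ℝ, X)) (ψ : C(ℝ, Y)) (h : MuClass ψ ⊆ MuClass φ)
    (hψ : BohrAlmostPeriodic ψ) : BohrAlmostPeriodic φ := by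
  intro ε hε
  by_contra hnot
  obtain ⟨v, hv⟩ := exists_seq_sub_notMem_of_not_relativelyDense hnot
  obtain ⟨k, hk, χ, hχ⟩ := hψ.exists_subseq_tendstoUniformly v
  obtain ⟨χ', hχ'⟩ :=
    exists_tendstoUniformly_of_mem_MuClass (h (mem_MuClass_of_tendstoUniformly hχ))
  obtain ⟨N, hN⟩ := exists_isAlmostPeriod_of_tendstoUniformly hχ' hε
  exact hv _ _ (hk N.lt_succ_self) hN

/-- If `𝔐^u_ψ ⊆ 𝔐^u_φ` and `ψ` is Bohr almost periodic, then `φ` is Bohr almost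
periodic. -/
theorem bohrAlmostPeriodic_of_MuClass_subset
    {X Y : Type*} [MetricSpace X] [CompleteSpace X] [MetricSpace Y] [CompleteSpace Y]
    (φ : C(ℝ, X)) (ψ : C(ℝ, Y)) (h : MuClass ψ ⊆ MuClass φ)
    (hψ : BohrAlmostPeriodic ψ) : BohrAlmostPeriodic φ :=
  bohrAlmostPeriodic_of_MuClass_subset_general φ ψ h hψ
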